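/- Define the nine-dimensional map R̃: ℝ⁹ → ℝ⁹ by the hierarchical Kondo beta function with magnetic field (Eq. (C.1)), with normalization C = 1 + 2ℓ₀² + (ℓ₀+ℓ₆)² + 9ℓ₁² + 9ℓ₂² + 324ℓ₃² + ℓ₄²/2 + ℓ₅²/2 + 18ℓ₇² + 18ℓ₈². Then the point ℓ = (0,0,1/3,0,0,2,0,0,0) is a fixed point of R̃. -/
import Mathlib

/-- The hierarchical Kondo beta function with magnetic field (Eq. (C.1)). -/
noncomputable def kondoRh (l : Fin 9 → ℝ) : Fin 9 → ℝ :=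
  let C := 1 + 2*(l 0)^2 + (l 0 + l 6)^2 + 9*(l 1)^2 + 9*(l 2)^2 + 324*(l 3)^2
    + (l 4)^2/2 + (l 5)^2/2 + 18*(l 7)^2 + 18*(l 8)^2
  ![ (l 0 - 2*(l 0)*(l 6) + 18*(l 0)*(l 3) + 3*(l 0)*(l 2) + 3*(l 0)*(l 1)
        - 2*(l 0)^2) / C,
     ((l 1)/2 + 9*(l 2)*(l 3) + 3*(l 8)^2/2 + (l 6)^2/12 + (l 5)*(l 7)/2
        + (l 4)^2/24 + (l 0)*(l 6)/6 + (l 0)^2/4) / C,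
     (2*(l 2) + 36*(l 1)*(l 3) + (l 0)^2 + 6*(l 7)^2 + (l 6)^2/3 + (l 5)^2/6
        + 2*(l 4)*(l 8) + 2*(l 0)*(l 6)/3) / C,
     ((l 3)/2 + (l 1)*(l 2)/4 + (l 0)^2/24 + (l 0)*(l 6)/36 + (l 6)^2/72
        + (l 5)*(l 7)/12 + (l 4)*(l 8)/12) / C,
     (l 4 + 6*(l 6)*(l 7) + (l 5)*(l 6) + 108*(l 3)*(l 8) + 18*(l 2)*(l 8)
        + 3*(l 1)*(l 4) + 6*(l 0)*(l 7) + (l 0)*(l 5)) / C,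
     (2*(l 5) + 12*(l 6)*(l 8) + 2*(l 4)*(l 6) + 216*(l 3)*(l 7) + 6*(l 2)*(l 5)
        + 36*(l 1)*(l 7) + 12*(l 0)*(l 8) + 2*(l 0)*(l 4)) / C,
     (l 6 + 18*(l 7)*(l 8) + 3*(l 5)*(l 8) + 3*(l 4)*(l 7) + (l 4)*(l 5)/2
        + 18*(l 3)*(l 6) + 3*(l 2)*(l 6) + 3*(l 1)*(l 6) + 2*(l 0)*(l 6)) / C,
     ((l 7)/2 + (l 6)*(l 8)/2 + (l 4)*(l 6)/12 + 3*(l 3)*(l 5)/2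
        + 3*(l 2)*(l 7)/2 + (l 1)*(l 5)/4 + (l 0)*(l 8)/2 + (l 0)*(l 4)/12) / C,
     (l 8 + (l 6)*(l 7) + (l 5)*(l 6)/6 + 3*(l 3)*(l 4) + (l 2)*(l 4)/2
        + 3*(l 1)*(l 8) + (l 0)*(l 7) + (l 0)*(l 5)/6) / C ]

theorem field_fixed_point :
    kondoRh ![0, 0, 1/3, 0, 0, 2, 0, 0, 0] = ![0, 0, 1/3, 0, 0, 2, 0, 0, 0] := by
  have h5 : (![0, 0, 1/3, 0, 0, 2, 0, 0, 0] : Fin 9 → ℝ) 5 = 2 := rfl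
  have h6 : (![0, 0, 1/3, 0, 0, 2, 0, 0, 0] : Fin 9 → ℝ) 6 = 0 := rfl
  have h7 : (![0, 0, 1/3, 0, 0, 2, 0, 0, 0] : Fin 9 → ℝ) 7 = 0 := rfl
  have h8 : (![0, 0, 1/3, 0, 0, 2, 0, 0, 0] : Fin 9 → ℝ) 8 = 0 := rfl
  funext i
  fin_cases i <;>
    simp [kondoRh, h5, h6, h7, h8, Matrix.cons_val_succ] <;> norm_num [h5, h6, h7, h8]
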